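/- arXiv:math/0405360 — 2 statements merged into one kernel-verified Lean document; each statement's English description precedes it below -/
import Mathlib

section
/- Let (X, B, μ) be a probability space, let τ be a measure-preserving automorphism, and suppose that for some n ≥ 1 and ε > 0 we have μ({x : τⁿ(x) = x}) ≥ ε. Then there is no measurable set b with |μ(b) − 1/2| ≤ ε/9 and μ(b ∩ τⁿ(b)) ≤ ε/9. Equivalently: if for all n ≥ 1 and all δ > 0 there exists a measurable set b with |μ(b) − 1/2| ≤ δ and μ(b ∩ τⁿ(b)) ≤ δ, then τ is aperiodic. -/
open MeasureTheory Set

/-- If `τ` is a measure-preserving automorphism of a probability space and for some `n ≥ 1`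
the set of points of period dividing `n` has measure at least `ε > 0`, then there is no
measurable set `b` with `|μ(b) − 1/2| ≤ ε/9` and `μ(b ∩ τⁿ(b)) ≤ ε/9`. -/
theorem no_almost_halving_set_of_periodic {X : Type*} [MeasurableSpace X] (μ : Measure X)
    [IsProbabilityMeasure μ]
    (τ : X ≃ᵐ X) (hτ : MeasurePreserving τ μ μ)
    (n : ℕ) (hn : 1 ≤ n) (ε : ℝ) (hε : 0 < ε)
    (hper : ENNReal.ofReal ε ≤ μ {x | (⇑τ)^[n] x = x}) :
    ¬ ∃ b : Set X, MeasurableSet b ∧ |(μ b).toReal - 1/2| ≤ ε / 9 ∧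
        (μ (b ∩ (⇑τ)^[n] '' b)).toReal ≤ ε / 9 := by
  rintro ⟨b, hb, hb1, hb2⟩
  set P := {x | (⇑τ)^[n] x = x} with hPdef
  have hLI : Function.LeftInverse (⇑τ.symm)^[n] (⇑τ)^[n] :=
    (Function.LeftInverse.iterate τ.symm_apply_apply n)
  have hτn : MeasurePreserving (⇑τ)^[n] μ μ := hτ.iterate n
  have hτsn : MeasurePreserving (⇑τ.symm)^[n] μ μ := (hτ.symm τ).iterate n
  have himg : (⇑τ)^[n] '' b = (⇑τ.symm)^[n] ⁻¹' b := by
    ext y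
    constructor
    · rintro ⟨x, hx, rfl⟩
      simpa [hLI x] using hx
    · intro hy
      exact ⟨(⇑τ.symm)^[n] y, hy,
        (Function.LeftInverse.iterate (τ.apply_symm_apply) n) y⟩
  set t := (⇑τ)^[n] '' b with htdef
  have hmt : MeasurableSet t := himg ▸ (hτsn.measurable hb)
  have hμt : μ t = μ b := by
    rw [himg]
    exact hτsn.measure_preimage hb.nullMeasurableSet
  -- finiteness
  have hfin : ∀ s : Set X, μ s ≠ ⊤ := fun s => (measure_lt_top μ s).ne
  -- subset facts
  have hsub1 : b ∩ P ⊆ b ∩ t := by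
    rintro x ⟨hxb, hxP⟩
    exact ⟨hxb, ⟨x, hxb, hxP⟩⟩
  have hsub2 : bᶜ ∩ P ⊆ (b ∪ t)ᶜ := by
    rintro x ⟨hxb, hxP⟩
    rw [compl_union]
    refine ⟨hxb, ?_⟩
    rw [himg]
    intro hx
    have : (⇑τ.symm)^[n] x = x := by
      conv_lhs => rw [← hxP]
      exact hLI x
    rw [mem_preimage, this] at hx
    exact hxb hx
  -- ENNReal facts
  have hPsplit : μ P ≤ μ (b ∩ P) + μ (bᶜ ∩ P) := by
    have : P ⊆ (b ∩ P) ∪ (bᶜ ∩ P) := by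
      intro x hx
      by_cases hxb : x ∈ b
      · exact Or.inl ⟨hxb, hx⟩
      · exact Or.inr ⟨hxb, hx⟩
    exact le_trans (measure_mono this) (measure_union_le _ _)
  have hcompl : μ ((b ∪ t)ᶜ) = 1 - μ (b ∪ t) := prob_compl_eq_one_sub (hb.union hmt)
  have hIE : μ (b ∪ t) + μ (b ∩ t) = μ b + μ t := measure_union_add_inter b hmt
  -- move to reals
  set A := (μ b).toReal with hA
  set I := (μ (b ∩ t)).toReal with hI
  set U := (μ (b ∪ t)).toReal with hU
  have hU1 : μ (b ∪ t) ≤ 1 := prob_le_one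
  have hIE' : U + I = A + A := by
    have := congrArg ENNReal.toReal hIE
    rwa [ENNReal.toReal_add (hfin _) (hfin _), ENNReal.toReal_add (hfin _) (hfin _),
      hμt] at this
  have hεP : ε ≤ (μ P).toReal := by
    have := ENNReal.toReal_mono (hfin P) hper
    rwa [ENNReal.toReal_ofReal hε.le] at this
  have h1 : (μ P).toReal ≤ (μ (b ∩ P)).toReal + (μ (bᶜ ∩ P)).toReal := by
    have := ENNReal.toReal_mono (by simp [hfin]) hPsplit
    rwa [ENNReal.toReal_add (hfin _) (hfin _)] at this
  have h2 : (μ (b ∩ P)).toReal ≤ I := ENNReal.toReal_mono (hfin _) (measure_mono hsub1)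
  have h3 : (μ (bᶜ ∩ P)).toReal ≤ 1 - U := by
    have h3' : (μ (bᶜ ∩ P)).toReal ≤ (μ ((b ∪ t)ᶜ)).toReal :=
      ENNReal.toReal_mono (hfin _) (measure_mono hsub2)
    have : (μ ((b ∪ t)ᶜ)).toReal = 1 - U := by
      rw [hcompl, ENNReal.toReal_sub_of_le hU1 ENNReal.one_ne_top, ENNReal.toReal_one]
    linarith [h3', this.le, this.ge]
  have habs := abs_le.mp hb1
  linarith [habs.1, habs.2, hb2]
end

section
/- Let ([0,1], L, λ) be the unit interval with Lebesgue measure. Let (A₁, ..., Aₙ) and (B₁, ..., Bₙ) be two measurable partitions of [0,1]. Then there exist measurable partitions (A₁', ..., Aₙ') and (B₁', ..., Bₙ') with λ(A_i') = λ(A_i) and λ(B_i') = λ(B_i) for all i, such that λ(A_i' Δ B_i') = |λ(A_i) − λ(B_i)| for every i ≤ n. -/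
open MeasureTheory Set Function
open scoped symmDiff

/-!
Put `a i = λ(A i)`, `b i = λ(B i)` and `m i = min (a i) (b i)`. Lay the intervals of lengths
`m i` side by side from `0`, and behind them, from `t = ∑ m i`, once the intervals of lengths
`a i - m i` and once those of lengths `b i - m i`. The cell `A' i` is the `i`-th common interval
together with the `i`-th interval of the first row behind `t`, and `B' i` likewise with the
second row. One of the two rear intervals is empty, so `A' i Δ B' i` is the other one, of
length `|a i - b i|`.
-/

section FinitePartition

variable {α ι : Type*} [MeasurableSpace α] {μ : Measure α}

lemma MeasureTheory.Measure.restrict_diff_eq_compl {s : Set α} (hs : MeasurableSet s)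
    (t : Set α) :
    μ.restrict s (s \ t) = μ.restrict s tᶜ := by
  rw [Measure.restrict_apply' hs, Measure.restrict_apply' hs, sdiff_eq_compl_inter, inter_assoc,
    inter_self]

lemma sum_measureReal_le_one [Fintype ι] [IsProbabilityMeasure μ] {P : ι → Set α}
    (hP : ∀ i, MeasurableSet (P i)) (hdisj : Pairwise (Disjoint on P)) :
    ∑ i, μ.real (P i) ≤ 1 :=
  (measureReal_iUnion_fintype hdisj hP).symm.le.trans measureReal_le_one

lemma measure_compl_iUnion_eq_of_measure_eq [Countable ι] [IsFiniteMeasure μ]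
    {P Q : ι → Set α}
    (hP : ∀ i, MeasurableSet (P i)) (hPdisj : Pairwise (Disjoint on P))
    (hQ : ∀ i, MeasurableSet (Q i)) (hQdisj : Pairwise (Disjoint on Q))
    (hPQ : ∀ i, μ (P i) = μ (Q i)) :
    μ (⋃ i, P i)ᶜ = μ (⋃ i, Q i)ᶜ := by
  rw [measure_compl (.iUnion hP) (measure_ne_top _ _),
    measure_compl (.iUnion hQ) (measure_ne_top _ _), measure_iUnion hPdisj hP,
    measure_iUnion hQdisj hQ, tsum_congr hPQ]

end FinitePartition

section ConsecutiveIco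

variable {ι : Type*} [LinearOrder ι] [LocallyFiniteOrderBot ι]

noncomputable def consecutiveIco (o : ℝ) (w : ι → ℝ) (i : ι) : Set ℝ :=
  Ico (o + ∑ j ∈ Finset.Iio i, w j) (o + ∑ j ∈ Finset.Iio i, w j + w i)

lemma sum_Iio_add_self (w : ι → ℝ) (i : ι) :
    ∑ j ∈ Finset.Iio i, w j + w i = ∑ j ∈ Finset.Iic i, w j := by
  rw [← Finset.Iio_insert, Finset.sum_insert Finset.notMem_Iio_self, add_comm]

variable {w : ι → ℝ}

lemma sum_Iio_add_self_le_sum_Iio (hw : 0 ≤ w) {i j : ι} (hij : i < j) :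
    ∑ k ∈ Finset.Iio i, w k + w i ≤ ∑ k ∈ Finset.Iio j, w k := by
  rw [sum_Iio_add_self]
  exact Finset.sum_le_sum_of_subset_of_nonneg
    (fun k hk => Finset.mem_Iio.mpr ((Finset.mem_Iic.mp hk).trans_lt hij)) fun k _ _ => hw k

lemma sum_Iio_add_self_le_sum [Fintype ι] (hw : 0 ≤ w) (i : ι) :
    ∑ k ∈ Finset.Iio i, w k + w i ≤ ∑ k, w k := by
  rw [sum_Iio_add_self]
  exact Finset.sum_le_sum_of_subset_of_nonneg (Finset.subset_univ _) fun k _ _ => hw k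

lemma measurableSet_consecutiveIco (o : ℝ) (w : ι → ℝ) (i : ι) :
    MeasurableSet (consecutiveIco o w i) :=
  measurableSet_Ico

lemma volume_consecutiveIco (o : ℝ) (w : ι → ℝ) (i : ι) :
    volume (consecutiveIco o w i) = ENNReal.ofReal (w i) := by
  rw [consecutiveIco, Real.volume_Ico, add_sub_cancel_left]

lemma consecutiveIco_eq_empty (o : ℝ) {i : ι} (hi : w i ≤ 0) : consecutiveIco o w i = ∅ :=
  Ico_eq_empty (by linarith)

lemma consecutiveIco_subset [Fintype ι] (hw : 0 ≤ w) (o : ℝ) (i : ι) :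
    consecutiveIco o w i ⊆ Ico o (o + ∑ j, w j) := by
  rintro x ⟨hlo, hhi⟩
  have := Finset.sum_nonneg fun j (_ : j ∈ Finset.Iio i) => hw j
  have := sum_Iio_add_self_le_sum hw i
  exact ⟨by linarith, by linarith⟩

lemma pairwise_disjoint_consecutiveIco (hw : 0 ≤ w) (o : ℝ) :
    Pairwise (Disjoint on consecutiveIco o w) := by
  suffices h : ∀ i j, i < j → Disjoint (consecutiveIco o w i) (consecutiveIco o w j) from
    fun i j hij => hij.lt_or_gt.elim (h i j) fun hji => (h j i hji).symm
  intro i j hij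
  have := sum_Iio_add_self_le_sum_Iio hw hij
  exact Set.disjoint_left.mpr fun x ⟨_, hxi⟩ ⟨hxj, _⟩ => by linarith

end ConsecutiveIco

section CouplingCell

variable {ι : Type*} [LinearOrder ι] [LocallyFiniteOrderBot ι] [Fintype ι]

noncomputable def couplingCell (a b : ι → ℝ) (i : ι) : Set ℝ :=
  consecutiveIco 0 (a ⊓ b) i ∪ consecutiveIco (∑ j, (a ⊓ b) j) (a - a ⊓ b) i

lemma couplingCell_comm_eq (a b : ι → ℝ) (i : ι) :
    couplingCell b a i =
      consecutiveIco 0 (a ⊓ b) i ∪ consecutiveIco (∑ j, (a ⊓ b) j) (b - a ⊓ b) i := by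
  rw [couplingCell, inf_comm]

variable {a b : ι → ℝ}

lemma disjoint_consecutiveIco_inf (ha : 0 ≤ a) (hb : 0 ≤ b) {d : ι → ℝ} (hd : 0 ≤ d)
    (i j : ι) :
    Disjoint (consecutiveIco 0 (a ⊓ b) i) (consecutiveIco (∑ k, (a ⊓ b) k) d j) := by
  refine Set.disjoint_left.mpr fun x hx hx' => ?_
  have := (consecutiveIco_subset (le_inf ha hb) 0 i hx).2
  have := (consecutiveIco_subset hd _ j hx').1
  linarith

lemma measurableSet_couplingCell (a b : ι → ℝ) (i : ι) : MeasurableSet (couplingCell a b i) :=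
  (measurableSet_consecutiveIco _ _ _).union (measurableSet_consecutiveIco _ _ _)

lemma couplingCell_subset (ha : 0 ≤ a) (hb : 0 ≤ b) (i : ι) :
    couplingCell a b i ⊆ Ico 0 (∑ j, a j) := by
  have hsum : ∑ j, (a ⊓ b) j + ∑ j, (a - a ⊓ b) j = ∑ j, a j := by
    rw [← Finset.sum_add_distrib]
    simp
  refine union_subset ((consecutiveIco_subset (le_inf ha hb) 0 i).trans ?_)
    ((consecutiveIco_subset (sub_nonneg.mpr inf_le_left) _ i).trans ?_)
  · have := Finset.sum_nonneg fun j (_ : j ∈ Finset.univ) =>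
      sub_nonneg.mpr (inf_le_left : a ⊓ b ≤ a) j
    exact Ico_subset_Ico_right (by linarith)
  · exact Ico_subset_Ico (Finset.sum_nonneg fun j _ => le_inf ha hb j) hsum.le

lemma pairwise_disjoint_couplingCell (ha : 0 ≤ a) (hb : 0 ≤ b) :
    Pairwise (Disjoint on couplingCell a b) := by
  intro i j hij
  have hrear := sub_nonneg.mpr (inf_le_left : a ⊓ b ≤ a)
  simp only [Function.onFun, couplingCell, disjoint_union_left, disjoint_union_right]
  exact ⟨⟨pairwise_disjoint_consecutiveIco (le_inf ha hb) 0 hij,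
      (disjoint_consecutiveIco_inf ha hb hrear j i).symm⟩,
    ⟨disjoint_consecutiveIco_inf ha hb hrear i j,
      pairwise_disjoint_consecutiveIco hrear _ hij⟩⟩

lemma volume_couplingCell (ha : 0 ≤ a) (hb : 0 ≤ b) (i : ι) :
    volume (couplingCell a b i) = ENNReal.ofReal (a i) := by
  rw [couplingCell, measure_union (disjoint_consecutiveIco_inf ha hb
      (sub_nonneg.mpr inf_le_left) i i) (measurableSet_consecutiveIco _ _ _),
    volume_consecutiveIco, volume_consecutiveIco,
    ← ENNReal.ofReal_add (le_inf ha hb i) (sub_nonneg.mpr (inf_le_left : a ⊓ b ≤ a) i)]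
  simp

lemma volume_symmDiff_couplingCell (ha : 0 ≤ a) (hb : 0 ≤ b) (i : ι) :
    volume (couplingCell a b i ∆ couplingCell b a i) = ENNReal.ofReal |a i - b i| := by
  wlog hab : a i ≤ b i generalizing a b
  · rw [symmDiff_comm, abs_sub_comm]
    exact this hb ha (le_of_not_ge hab)
  have hrear : consecutiveIco (∑ j, (a ⊓ b) j) (a - a ⊓ b) i = ∅ :=
    consecutiveIco_eq_empty _ (by simp [hab])
  have hdisj :
      consecutiveIco 0 (a ⊓ b) i ∪ consecutiveIco (∑ j, (a ⊓ b) j) (b - a ⊓ b) i =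
        consecutiveIco 0 (a ⊓ b) i ∆ consecutiveIco (∑ j, (a ⊓ b) j) (b - a ⊓ b) i :=
    (disjoint_consecutiveIco_inf ha hb (sub_nonneg.mpr inf_le_right) i i).symmDiff_eq_sup.symm
  rw [couplingCell_comm_eq a b, couplingCell, hrear, union_empty, hdisj,
    symmDiff_symmDiff_cancel_left, volume_consecutiveIco, abs_sub_comm,
    abs_of_nonneg (sub_nonneg.mpr hab)]
  simp [hab]

end CouplingCell

theorem partitions_optimal_coupling_general (n : ℕ) (A B : Fin n → Set ℝ)
    (μ : Measure ℝ) (hμ : μ = volume.restrict (Icc (0:ℝ) 1))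
    (hAmeas : ∀ i, MeasurableSet (A i)) (hBmeas : ∀ i, MeasurableSet (B i))
    (hAdisj : ∀ i j, i ≠ j → Disjoint (A i) (A j))
    (hBdisj : ∀ i j, i ≠ j → Disjoint (B i) (B j))
    (hAcov : μ (Icc (0:ℝ) 1 \ ⋃ i, A i) = 0) (hBcov : μ (Icc (0:ℝ) 1 \ ⋃ i, B i) = 0) :
    ∃ A' B' : Fin n → Set ℝ,
      (∀ i, A' i ⊆ Icc (0:ℝ) 1) ∧ (∀ i, B' i ⊆ Icc (0:ℝ) 1) ∧
      (∀ i, MeasurableSet (A' i)) ∧ (∀ i, MeasurableSet (B' i)) ∧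
      (∀ i j, i ≠ j → Disjoint (A' i) (A' j)) ∧
      (∀ i j, i ≠ j → Disjoint (B' i) (B' j)) ∧
      μ (Icc (0:ℝ) 1 \ ⋃ i, A' i) = 0 ∧ μ (Icc (0:ℝ) 1 \ ⋃ i, B' i) = 0 ∧
      (∀ i, μ (A' i) = μ (A i)) ∧ (∀ i, μ (B' i) = μ (B i)) ∧
      (∀ i, (μ (symmDiff (A' i) (B' i))).toReal = |(μ (A i)).toReal - (μ (B i)).toReal|) := by
  have : IsProbabilityMeasure μ := ⟨by simp [hμ]⟩
  have hvol : ∀ s ⊆ Icc (0:ℝ) 1, μ s = volume s := fun s hs =>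
    hμ ▸ Measure.restrict_eq_self _ hs
  have hdiff : ∀ U, μ (Icc (0:ℝ) 1 \ U) = μ Uᶜ := fun U =>
    hμ ▸ Measure.restrict_diff_eq_compl measurableSet_Icc U
  set a : Fin n → ℝ := fun i => μ.real (A i)
  set b : Fin n → ℝ := fun i => μ.real (B i)
  have ha : 0 ≤ a := fun i => measureReal_nonneg
  have hb : 0 ≤ b := fun i => measureReal_nonneg
  have hsubA : ∀ i, couplingCell a b i ⊆ Icc (0:ℝ) 1 := fun i =>
    (couplingCell_subset ha hb i).trans <| Ico_subset_Icc_self.trans <|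
      Icc_subset_Icc_right (sum_measureReal_le_one hAmeas hAdisj)
  have hsubB : ∀ i, couplingCell b a i ⊆ Icc (0:ℝ) 1 := fun i =>
    (couplingCell_subset hb ha i).trans <| Ico_subset_Icc_self.trans <|
      Icc_subset_Icc_right (sum_measureReal_le_one hBmeas hBdisj)
  have hA' : ∀ i, μ (couplingCell a b i) = μ (A i) := fun i => by
    rw [hvol _ (hsubA i), volume_couplingCell ha hb, ofReal_measureReal]
  have hB' : ∀ i, μ (couplingCell b a i) = μ (B i) := fun i => by
    rw [hvol _ (hsubB i), volume_couplingCell hb ha, ofReal_measureReal]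
  have hcovA : μ (Icc (0:ℝ) 1 \ ⋃ i, couplingCell a b i) = 0 := by
    rw [hdiff, measure_compl_iUnion_eq_of_measure_eq (measurableSet_couplingCell a b)
      (pairwise_disjoint_couplingCell ha hb) hAmeas hAdisj hA', ← hdiff, hAcov]
  have hcovB : μ (Icc (0:ℝ) 1 \ ⋃ i, couplingCell b a i) = 0 := by
    rw [hdiff, measure_compl_iUnion_eq_of_measure_eq (measurableSet_couplingCell b a)
      (pairwise_disjoint_couplingCell hb ha) hBmeas hBdisj hB', ← hdiff, hBcov]
  refine ⟨couplingCell a b, couplingCell b a, hsubA, hsubB, measurableSet_couplingCell a b,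
    measurableSet_couplingCell b a, fun _ _ hij => pairwise_disjoint_couplingCell ha hb hij,
    fun _ _ hij => pairwise_disjoint_couplingCell hb ha hij,
    hcovA, hcovB, hA', hB', fun i => ?_⟩
  rw [hvol _ (symmDiff_le_sup.trans (union_subset (hsubA i) (hsubB i))),
    volume_symmDiff_couplingCell ha hb, ENNReal.toReal_ofReal (abs_nonneg _)]
  rfl

/-- Given two measurable partitions `(A₁,…,Aₙ)` and `(B₁,…,Bₙ)` of `[0,1]` with Lebesgue
measure, there exist partitions `(A₁',…,Aₙ')` and `(B₁',…,Bₙ')` with the same cell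
measures such that `λ(A_i' Δ B_i') = |λ(A_i) − λ(B_i)|` for every `i`. -/
theorem partitions_optimal_coupling (n : ℕ) (A B : Fin n → Set ℝ)
    (μ : Measure ℝ) (hμ : μ = volume.restrict (Icc (0:ℝ) 1))
    (hAsub : ∀ i, A i ⊆ Icc (0:ℝ) 1) (hBsub : ∀ i, B i ⊆ Icc (0:ℝ) 1)
    (hAmeas : ∀ i, MeasurableSet (A i)) (hBmeas : ∀ i, MeasurableSet (B i))
    (hAdisj : ∀ i j, i ≠ j → Disjoint (A i) (A j))
    (hBdisj : ∀ i j, i ≠ j → Disjoint (B i) (B j))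
    (hAcov : μ (Icc (0:ℝ) 1 \ ⋃ i, A i) = 0) (hBcov : μ (Icc (0:ℝ) 1 \ ⋃ i, B i) = 0) :
    ∃ A' B' : Fin n → Set ℝ,
      (∀ i, A' i ⊆ Icc (0:ℝ) 1) ∧ (∀ i, B' i ⊆ Icc (0:ℝ) 1) ∧
      (∀ i, MeasurableSet (A' i)) ∧ (∀ i, MeasurableSet (B' i)) ∧
      (∀ i j, i ≠ j → Disjoint (A' i) (A' j)) ∧
      (∀ i j, i ≠ j → Disjoint (B' i) (B' j)) ∧
      μ (Icc (0:ℝ) 1 \ ⋃ i, A' i) = 0 ∧ μ (Icc (0:ℝ) 1 \ ⋃ i, B' i) = 0 ∧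
      (∀ i, μ (A' i) = μ (A i)) ∧ (∀ i, μ (B' i) = μ (B i)) ∧
      (∀ i, (μ (symmDiff (A' i) (B' i))).toReal = |(μ (A i)).toReal - (μ (B i)).toReal|) :=
  partitions_optimal_coupling_general n A B μ hμ hAmeas hBmeas hAdisj hBdisj hAcov hBcov
end
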